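/- The space Esp_C is sober if and only if for every nonempty irreducible closed subset Z ⊆ Esp_C, the set 𝒫(Z) := {a ∈ E : U(a) ∩ Z ≠ ∅} is an element of C; moreover in that case Z = closure({𝒫(Z)}), i.e. 𝒫(Z) is the (unique) generic point of Z. -/

import Mathlib

/-- The basic open set `U(a) = {P ∈ C : a ∈ P}`. -/
def espU {E : Type*} (C : Set (Set E)) (a : E) : Set C := {P : C | a ∈ (P : Set E)}

/-- The topology on `C` generated by the basis `{U(a)}_{a ∈ E}`. -/
def espTop {E : Type*} (C : Set (Set E)) : TopologicalSpace C :=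
  TopologicalSpace.generateFrom {s | ∃ a : E, s = espU C a}

/-- `𝒫(Z) := {a ∈ E : U(a) ∩ Z ≠ ∅}`. -/
def espP {E : Type*} (C : Set (Set E)) (Z : Set C) : Set E :=
  {a : E | (espU C a ∩ Z).Nonempty}

/-!
A generic point `ξ` of `Z` lies in an open set exactly when `Z` meets it, so testing with
the opens `U(a)` forces `ξ = 𝒫(Z)`. Conversely, since the `U(a)` form a basis (by the
axiom `a ⊕ b ∈ P ↔ a ∈ P ∧ b ∈ P`), a closed set `Z` contains every `Q ∈ C` with
`Q ⊆ 𝒫(Z)`; as `Q ∈ closure {P}` exactly when `Q ⊆ P`, this makes `𝒫(Z)`, when it lies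
in `C`, a generic point of `Z`.
-/

section Esp

attribute [local instance] espTop

variable {E : Type*} {C : Set (Set E)}

lemma isOpen_espU (a : E) : IsOpen (espU C a) :=
  TopologicalSpace.GenerateOpen.basic _ ⟨a, rfl⟩

lemma isTopologicalBasis_espU {op : E → E → E} {z : E}
    (hC : ∀ P ∈ C, z ∈ P ∧ ∀ a b : E, op a b ∈ P ↔ a ∈ P ∧ b ∈ P) :
    TopologicalSpace.IsTopologicalBasis {s | ∃ a : E, s = espU C a} := by
  refine ⟨?_, ?_, rfl⟩
  · rintro _ ⟨a, rfl⟩ _ ⟨b, rfl⟩ P ⟨ha, hb⟩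
    exact ⟨espU C (op a b), ⟨op a b, rfl⟩, ((hC P.1 P.2).2 a b).2 ⟨ha, hb⟩,
      fun Q hQ => ((hC Q.1 Q.2).2 a b).1 hQ⟩
  · exact Set.eq_univ_of_forall fun P => ⟨espU C z, ⟨z, rfl⟩, (hC P.1 P.2).1⟩

instance t0Space_esp : T0Space C :=
  (t0Space_iff_inseparable C).2 fun _ _ h =>
    Subtype.ext <| Set.ext fun a => h.mem_open_iff (isOpen_espU a)

lemma esp_specializes_iff {op : E → E → E} {z : E}
    (hC : ∀ P ∈ C, z ∈ P ∧ ∀ a b : E, op a b ∈ P ↔ a ∈ P ∧ b ∈ P) {P Q : C} :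
    P ⤳ Q ↔ (Q : Set E) ⊆ P := by
  rw [specializes_iff_forall_open]
  refine ⟨fun h a haQ => h _ (isOpen_espU a) haQ, fun hQP s hs hQs => ?_⟩
  obtain ⟨_, ⟨a, rfl⟩, haQ, hUs⟩ := (isTopologicalBasis_espU hC).exists_subset_of_mem_open hQs hs
  exact hUs (hQP haQ)

lemma subset_espP {Z : Set C} {Q : C} (hQ : Q ∈ Z) : (Q : Set E) ⊆ espP C Z :=
  fun _ ha => ⟨Q, ha, hQ⟩

lemma mem_of_subset_espP {op : E → E → E} {z : E}
    (hC : ∀ P ∈ C, z ∈ P ∧ ∀ a b : E, op a b ∈ P ↔ a ∈ P ∧ b ∈ P)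
    {Z : Set C} (hZ : IsClosed Z) {Q : C} (hQ : (Q : Set E) ⊆ espP C Z) : Q ∈ Z := by
  by_contra hQZ
  obtain ⟨_, ⟨a, rfl⟩, haQ, hUZ⟩ :=
    (isTopologicalBasis_espU hC).exists_subset_of_mem_open hQZ hZ.isOpen_compl
  obtain ⟨R, hRa, hRZ⟩ := hQ haQ
  exact hUZ hRa hRZ

lemma espP_eq_of_isGenericPoint {Z : Set C} {ξ : C} (hξ : IsGenericPoint ξ Z) :
    espP C Z = ξ :=
  Set.ext fun a => by
    change (espU C a ∩ Z).Nonempty ↔ ξ ∈ espU C a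
    rw [Set.inter_comm, hξ.mem_open_set_iff (isOpen_espU a)]

lemma isGenericPoint_espP {op : E → E → E} {z : E}
    (hC : ∀ P ∈ C, z ∈ P ∧ ∀ a b : E, op a b ∈ P ↔ a ∈ P ∧ b ∈ P)
    {Z : Set C} (hZ : IsClosed Z) (h : espP C Z ∈ C) : IsGenericPoint ⟨espP C Z, h⟩ Z :=
  isGenericPoint_iff_specializes.2 fun _ => (esp_specializes_iff hC).trans
    ⟨mem_of_subset_espP hC hZ, subset_espP⟩

end Esp

theorem stmt_7 {E : Type*} (op : E → E → E) (z : E) (C : Set (Set E))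
    (hC : ∀ P ∈ C, z ∈ P ∧ ∀ a b : E, op a b ∈ P ↔ a ∈ P ∧ b ∈ P) :
    ((@QuasiSober _ (espTop C) ∧ @T0Space _ (espTop C)) ↔
      ∀ Z : Set C, @IsIrreducible _ (espTop C) Z → @IsClosed _ (espTop C) Z →
        espP C Z ∈ C) ∧
    (∀ Z : Set C, @IsIrreducible _ (espTop C) Z → @IsClosed _ (espTop C) Z →
      ∀ h : espP C Z ∈ C, Z = @closure _ (espTop C) {⟨espP C Z, h⟩}) := by
  let := espTop C
  refine ⟨⟨fun ⟨hsober, _⟩ Z hZ hZc => ?_, fun hP => ⟨⟨fun hZ hZc => ?_⟩, t0Space_esp⟩⟩,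
    fun Z _ hZc h => (isGenericPoint_espP hC hZc h).def.symm⟩
  · obtain ⟨ξ, hξ⟩ := hsober.sober hZ hZc
    rw [espP_eq_of_isGenericPoint hξ]
    exact ξ.2
  · exact ⟨_, isGenericPoint_espP hC hZc (hP _ hZ hZc)⟩
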